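/- arXiv:2010.03106 — 6 statements merged into one kernel-verified Lean document; each statement's English description precedes it below -/
import Mathlib

section
/- Let f : ℝᵈ → ℝ be convex and differentiable, g : ℝᵈ → ℝ be convex, and suppose x* minimizes f + g. Define f̃(x) := f(x) - ⟨∇f(x*), x⟩ and g̃(x) := g(x) + ⟨∇f(x*), x⟩. Then f̃ + g̃ = f + g everywhere, x* minimizes f̃, and x* minimizes g̃. -/
/-!
Along the segment `x* + t v`, `v = x - x*`, `t ∈ [0, 1]`, convexity bounds `f` and `g` by their
chords, while `t ↦ f (x* + t v)` has slope `⟪∇f(x*), v⟫` at `0`; Fermat's rule on `[0, 1]`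
compares the two. The chord of `f` gives `⟪∇f(x*), v⟫ ≤ f x - f x*`. The chord of `g` and the
minimality of `x*` give `f (x* + t v) - f x* ≥ g x* - g (x* + t v) ≥ t (g x* - g x)`, hence
`g x* - g x ≤ ⟪∇f(x*), v⟫`.
-/

open Set
open scoped RealInnerProductSpace

section

variable {E : Type*} [NormedAddCommGroup E] [NormedSpace ℝ E]

lemma HasFDerivAt.le_apply_of_forall_mul_le_sub {f : E → ℝ} {f' : E →L[ℝ] ℝ} {x v : E}
    {c : ℝ} (hf : HasFDerivAt f f' x) (h : ∀ t ∈ Icc (0 : ℝ) 1, t * c ≤ f (x + t • v) - f x) :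
    c ≤ f' v := by
  set φ : ℝ → ℝ := fun t ↦ f (x + t • v) - t * c
  have hmin : IsMinOn φ (Icc 0 1) 0 := fun t ht ↦ by
    have := h t ht
    simp only [mem_ofPred_eq, φ, zero_smul, add_zero, zero_mul, sub_zero]
    linarith
  have hline : HasDerivAt (fun t : ℝ ↦ x + t • v) v 0 := by
    simpa using ((hasDerivAt_id (0 : ℝ)).smul_const v).const_add x
  have hφ : HasDerivAt φ (f' v - c) 0 := by
    have hfx : HasFDerivAt f f' (x + (0 : ℝ) • v) := by simpa using hf
    exact (hfx.comp_hasDerivAt 0 hline).sub (hasDerivAt_mul_const c)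
  have hcone : (1 : ℝ) ∈ posTangentConeAt (Icc 0 1) (0 : ℝ) :=
    mem_posTangentConeAt_of_segment_subset (by simp [segment_eq_Icc])
  simpa using hmin.localize.hasFDerivWithinAt_nonneg hφ.hasFDerivAt.hasFDerivWithinAt hcone

variable {s : Set E} {f g : E → ℝ} {f' : E →L[ℝ] ℝ} {x y : E}

lemma ConvexOn.apply_add_smul_sub_le (hf : ConvexOn ℝ s f) (hx : x ∈ s) (hy : y ∈ s) {t : ℝ}
    (ht : t ∈ Icc (0 : ℝ) 1) : f (x + t • (y - x)) ≤ f x + t * (f y - f x) := by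
  have h := hf.2 hx hy (sub_nonneg.2 ht.2) ht.1 (sub_add_cancel 1 t)
  calc f (x + t • (y - x)) = f ((1 - t) • x + t • y) := by congr 1; module
    _ ≤ (1 - t) * f x + t * f y := h
    _ = f x + t * (f y - f x) := by ring

lemma ConvexOn.hasFDerivAt_apply_sub_le (hf : ConvexOn ℝ s f) (hx : x ∈ s) (hy : y ∈ s)
    (hf' : HasFDerivAt f f' x) : f' (y - x) ≤ f y - f x := by
  have := hf'.neg.le_apply_of_forall_mul_le_sub (v := y - x) (c := f x - f y) fun t ht ↦ by
    have hchord := hf.apply_add_smul_sub_le hx hy ht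
    simp only [Pi.neg_apply]
    linarith
  simp only [neg_apply] at this
  linarith

lemma ConvexOn.sub_le_hasFDerivAt_apply_of_isMinOn_add (hg : ConvexOn ℝ s g) (hx : x ∈ s)
    (hy : y ∈ s) (hf' : HasFDerivAt f f' x) (hmin : IsMinOn (f + g) s x) :
    g x - g y ≤ f' (y - x) :=
  hf'.le_apply_of_forall_mul_le_sub fun t ht ↦ by
    have hchord := hg.apply_add_smul_sub_le hx hy ht
    have hxt : f x + g x ≤ f (x + t • (y - x)) + g (x + t • (y - x)) :=
      hmin (hg.1.add_smul_sub_mem hx hy ht)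
    linarith

end

theorem stmt0 {d : ℕ} (f g : EuclideanSpace ℝ (Fin d) → ℝ)
    (hf : ConvexOn ℝ Set.univ f) (hfd : Differentiable ℝ f)
    (hg : ConvexOn ℝ Set.univ g)
    (xstar : EuclideanSpace ℝ (Fin d))
    (hmin : ∀ x, f xstar + g xstar ≤ f x + g x) :
    (∀ x, (f x - ⟪gradient f xstar, x⟫) + (g x + ⟪gradient f xstar, x⟫) = f x + g x) ∧
    (∀ x, f xstar - ⟪gradient f xstar, xstar⟫ ≤ f x - ⟪gradient f xstar, x⟫) ∧
    (∀ x, g xstar + ⟪gradient f xstar, xstar⟫ ≤ g x + ⟪gradient f xstar, x⟫) := by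
  have hf' := (hfd xstar).hasGradientAt.hasFDerivAt
  have hinner (x) : InnerProductSpace.toDual ℝ _ (gradient f xstar) (x - xstar) =
      ⟪gradient f xstar, x⟫ - ⟪gradient f xstar, xstar⟫ := by
    rw [InnerProductSpace.toDual_apply_apply, inner_sub_right]
  refine ⟨fun x ↦ by ring, fun x ↦ ?_, fun x ↦ ?_⟩
  · have := hf.hasFDerivAt_apply_sub_le (mem_univ xstar) (mem_univ x) hf'
    linarith [hinner x]
  · have := hg.sub_le_hasFDerivAt_apply_of_isMinOn_add (mem_univ xstar) (mem_univ x) hf'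
      fun x _ ↦ hmin x
    linarith [hinner x]
end

section
/- Let h : ℝᵈ → ℝ be L-smooth and μ-strongly convex with global minimizer y*. Then (2π/L)^{d/2} · exp(-h(y*)) ≤ ∫_{ℝᵈ} exp(-h(y)) dy ≤ (2π/μ)^{d/2} · exp(-h(y*)). -/
/-!
At the minimizer `y*` the gradient of `h` vanishes, so the strong convexity and smoothness
inequalities based at `y*` sandwich `h` between the quadratics
`h y* + (μ/2)‖y - y*‖²` and `h y* + (L/2)‖y - y*‖²`. Hence `exp (-h)` is sandwiched between two
Gaussians centred at `y*`, whose integrals are `(2π/L)^{d/2} e^{-h(y*)}` and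
`(2π/μ)^{d/2} e^{-h(y*)}`.
-/

open MeasureTheory
open scoped RealInnerProductSpace

section Gaussian

variable {V : Type*} [NormedAddCommGroup V] [InnerProductSpace ℝ V] [FiniteDimensional ℝ V]
  [MeasurableSpace V] [BorelSpace V]

theorem integral_exp_neg_add_half_mul_sq_norm_sub (a : ℝ) {b : ℝ} (hb : 0 < b) (c : V) :
    ∫ y : V, Real.exp (-(a + b / 2 * ‖y - c‖ ^ 2)) =
      (2 * Real.pi / b) ^ (Module.finrank ℝ V / 2 : ℝ) * Real.exp (-a) := by
  simp_rw [neg_add, Real.exp_add, ← neg_mul]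
  rw [integral_const_mul, integral_sub_right_eq_self (fun y : V => Real.exp (-(b / 2) * ‖y‖ ^ 2)),
    GaussianFourier.integral_rexp_neg_mul_sq_norm (by positivity), div_div_eq_mul_div,
    mul_comm Real.pi, mul_comm]

theorem integrable_exp_neg_add_half_mul_sq_norm_sub (a : ℝ) {b : ℝ} (hb : 0 < b) (c : V) :
    Integrable fun y : V => Real.exp (-(a + b / 2 * ‖y - c‖ ^ 2)) := by
  refine Integrable.of_integral_ne_zero ?_
  rw [integral_exp_neg_add_half_mul_sq_norm_sub a hb c]
  positivity

end Gaussian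

theorem gradient_eq_zero_of_forall_le {V : Type*} [NormedAddCommGroup V] [InnerProductSpace ℝ V]
    [CompleteSpace V] {h : V → ℝ} {c : V} (hmin : ∀ y, h c ≤ h y) : gradient h c = 0 := by
  rw [gradient, IsLocalMin.fderiv_eq_zero (Filter.Eventually.of_forall hmin), map_zero]

theorem stmt2 {d : ℕ} (h : EuclideanSpace ℝ (Fin d) → ℝ) (L mu : ℝ)
    (hmu : 0 < mu) (hmuL : mu ≤ L)
    (hdiff : Differentiable ℝ h)
    (hsc : ∀ x y, h x + ⟪gradient h x, y - x⟫ + mu / 2 * ‖y - x‖ ^ 2 ≤ h y)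
    (hsm : ∀ x y, h y ≤ h x + ⟪gradient h x, y - x⟫ + L / 2 * ‖y - x‖ ^ 2)
    (ystar : EuclideanSpace ℝ (Fin d)) (hystar : ∀ y, h ystar ≤ h y) :
    (2 * Real.pi / L) ^ ((d : ℝ) / 2) * Real.exp (-(h ystar)) ≤
        (∫ y : EuclideanSpace ℝ (Fin d), Real.exp (-(h y))) ∧
    (∫ y : EuclideanSpace ℝ (Fin d), Real.exp (-(h y))) ≤
        (2 * Real.pi / mu) ^ ((d : ℝ) / 2) * Real.exp (-(h ystar)) := by
  have hL : 0 < L := hmu.trans_le hmuL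
  have hgrad := gradient_eq_zero_of_forall_le hystar
  have hlower (y) : h ystar + mu / 2 * ‖y - ystar‖ ^ 2 ≤ h y := by
    simpa [hgrad] using hsc ystar y
  have hupper (y) : h y ≤ h ystar + L / 2 * ‖y - ystar‖ ^ 2 := by
    simpa [hgrad] using hsm ystar y
  have hgauss_mu := integrable_exp_neg_add_half_mul_sq_norm_sub (h ystar) hmu ystar
  have hgauss_L := integrable_exp_neg_add_half_mul_sq_norm_sub (h ystar) hL ystar
  have hint : Integrable fun y => Real.exp (-(h y)) := by
    have hcont := hdiff.continuous
    refine hgauss_mu.mono (by fun_prop) (Filter.Eventually.of_forall fun y => ?_)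
    simp only [Real.norm_eq_abs, Real.abs_exp]
    exact Real.exp_le_exp.2 (neg_le_neg (hlower y))
  have hvalue (b) (hb : 0 < b) := integral_exp_neg_add_half_mul_sq_norm_sub (h ystar) hb ystar
  simp only [finrank_euclideanSpace_fin] at hvalue
  constructor
  · rw [← hvalue L hL]
    exact integral_mono hgauss_L hint fun y => Real.exp_le_exp.2 (neg_le_neg (hupper y))
  · rw [← hvalue mu hmu]
    exact integral_mono hint hgauss_mu fun y => Real.exp_le_exp.2 (neg_le_neg (hlower y))
end

section
/- Let f : ℝᵈ → ℝ be μ-strongly convex with minimizer x*, and let λ > 0. Then the ratio ∫ exp(-f(x)) dx / ∫ exp(-f(x) - ‖x-x*‖²/(2λ)) dx is at most (1 + 1/(μλ))^{d/2}. -/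
open MeasureTheory
open scoped RealInnerProductSpace

set_option maxHeartbeats 1000000 in
theorem stmt3 {d : ℕ} (f : EuclideanSpace ℝ (Fin d) → ℝ) (mu lam : ℝ)
    (hmu : 0 < mu) (hlam : 0 < lam)
    (hdiff : Differentiable ℝ f)
    (hsc : ∀ x y, f x + ⟪gradient f x, y - x⟫ + mu / 2 * ‖y - x‖ ^ 2 ≤ f y)
    (xstar : EuclideanSpace ℝ (Fin d)) (hxstar : ∀ x, f xstar ≤ f x)
    (hint1 : Integrable (fun x : EuclideanSpace ℝ (Fin d) => Real.exp (-(f x))))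
    (hint2 : Integrable (fun x : EuclideanSpace ℝ (Fin d) =>
      Real.exp (-(f x) - ‖x - xstar‖ ^ 2 / (2 * lam)))) :
    (∫ x : EuclideanSpace ℝ (Fin d), Real.exp (-(f x))) ≤
      (1 + 1 / (mu * lam)) ^ ((d : ℝ) / 2) *
        ∫ x : EuclideanSpace ℝ (Fin d), Real.exp (-(f x) - ‖x - xstar‖ ^ 2 / (2 * lam)) := by
  have hml : 0 < mu * lam := mul_pos hmu hlam
  set c : ℝ := 1 + 1 / (mu * lam) with hc
  have hc1 : 1 ≤ c := by
    have h : 0 < 1 / (mu * lam) := by positivity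
    rw [hc]; linarith
  set α : ℝ := Real.sqrt c with hαdef
  have hα2 : α ^ 2 = c := Real.sq_sqrt (by linarith)
  have hα1 : 1 ≤ α := by nlinarith [Real.sqrt_nonneg c]
  have hα0 : 0 < α := by linarith
  -- gradient at minimizer is zero
  have hgrad0 : gradient f xstar = 0 := by
    have hloc : IsLocalMin f xstar := Filter.Eventually.of_forall hxstar
    have := hloc.fderiv_eq_zero
    simp [gradient, this]
  -- key pointwise inequality
  have key : ∀ u : EuclideanSpace ℝ (Fin d),
      f (xstar + u) + ‖u‖ ^ 2 / (2 * lam) ≤ f (xstar + α • u) := by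
    intro u
    have h1 := hsc xstar (xstar + u)
    rw [add_sub_cancel_left, hgrad0, inner_zero_left] at h1
    have h2 := hsc (xstar + u) xstar
    have e2 : xstar - (xstar + u) = -u := by abel
    rw [e2, inner_neg_right, norm_neg] at h2
    have h3 := hsc (xstar + u) (xstar + α • u)
    have e3 : xstar + α • u - (xstar + u) = (α - 1) • u := by
      rw [sub_smul, one_smul]; abel
    rw [e3, real_inner_smul_right, norm_smul] at h3
    have hns : ‖(α - 1)‖ ^ 2 = (α - 1) ^ 2 := by
      rw [Real.norm_eq_abs, sq_abs]
    rw [mul_pow, hns] at h3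
    have ht : mu * ‖u‖ ^ 2 ≤ ⟪gradient f (xstar + u), u⟫ := by nlinarith
    have heq : ((α - 1) * mu + mu / 2 * (α - 1) ^ 2) * ‖u‖ ^ 2 = ‖u‖ ^ 2 / (2 * lam) := by
      have hml2 : mu * lam * α ^ 2 = mu * lam + 1 := by
        rw [hα2, hc]; field_simp
      field_simp
      nlinarith [hml2]
    nlinarith [mul_nonneg (sub_nonneg.2 hα1)
      (sub_nonneg.2 ht)]
  -- integrability of the translated target
  have hRint : Integrable (fun y : EuclideanSpace ℝ (Fin d) =>
      Real.exp (-(f (xstar + y)) - ‖y‖ ^ 2 / (2 * lam))) := by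
    have := hint2.comp_add_left xstar
    simpa using this
  -- continuity / measurability of the scaled integrand
  have hcont : Continuous fun y : EuclideanSpace ℝ (Fin d) =>
      Real.exp (-(f (xstar + α • y))) :=
    Real.continuous_exp.comp
      ((hdiff.continuous.comp (continuous_const.add (continuous_id.const_smul α))).neg)
  have hpt : ∀ y : EuclideanSpace ℝ (Fin d),
      Real.exp (-(f (xstar + α • y))) ≤ Real.exp (-(f (xstar + y)) - ‖y‖ ^ 2 / (2 * lam)) := by
    intro y
    apply Real.exp_le_exp.2
    have := key y
    linarith
  have hLint : Integrable (fun y : EuclideanSpace ℝ (Fin d) =>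
      Real.exp (-(f (xstar + α • y)))) := by
    refine hRint.mono' hcont.aestronglyMeasurable ?_
    filter_upwards with y
    rw [Real.norm_eq_abs, abs_of_pos (Real.exp_pos _)]
    exact hpt y
  have hmono : (∫ y : EuclideanSpace ℝ (Fin d), Real.exp (-(f (xstar + α • y)))) ≤
      ∫ y : EuclideanSpace ℝ (Fin d), Real.exp (-(f (xstar + y)) - ‖y‖ ^ 2 / (2 * lam)) :=
    integral_mono hLint hRint hpt
  -- change of variables: scaling
  have hsc1 : (∫ y : EuclideanSpace ℝ (Fin d), Real.exp (-(f (xstar + α • y)))) =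
      (α ^ d)⁻¹ * ∫ y : EuclideanSpace ℝ (Fin d), Real.exp (-(f (xstar + y))) := by
    have := Measure.integral_comp_smul_of_nonneg (volume : Measure (EuclideanSpace ℝ (Fin d)))
      (fun y => Real.exp (-(f (xstar + y)))) α (hR := le_of_lt hα0)
    simpa [finrank_euclideanSpace_fin, smul_eq_mul] using this
  -- change of variables: translations
  have htr1 : (∫ y : EuclideanSpace ℝ (Fin d), Real.exp (-(f (xstar + y)))) =
      ∫ x : EuclideanSpace ℝ (Fin d), Real.exp (-(f x)) :=
    integral_add_left_eq_self (fun x => Real.exp (-(f x))) xstar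
  have htr2 : (∫ y : EuclideanSpace ℝ (Fin d), Real.exp (-(f (xstar + y)) - ‖y‖ ^ 2 / (2 * lam))) =
      ∫ x : EuclideanSpace ℝ (Fin d), Real.exp (-(f x) - ‖x - xstar‖ ^ 2 / (2 * lam)) := by
    rw [← integral_add_left_eq_self
      (fun x => Real.exp (-(f x) - ‖x - xstar‖ ^ 2 / (2 * lam))) xstar]
    simp
  have hαd : (0:ℝ) < α ^ d := by positivity
  have hpow : (α : ℝ) ^ d = c ^ ((d : ℝ) / 2) := by
    have hc0 : (0:ℝ) ≤ c := by linarith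
    rw [hαdef, Real.sqrt_eq_rpow, ← Real.rpow_natCast (c ^ ((1:ℝ)/2)) d,
      ← Real.rpow_mul hc0]
    congr 1
    ring
  calc (∫ x : EuclideanSpace ℝ (Fin d), Real.exp (-(f x)))
      = α ^ d * ∫ y : EuclideanSpace ℝ (Fin d), Real.exp (-(f (xstar + α • y))) := by
        rw [hsc1, htr1]; field_simp
    _ ≤ α ^ d * ∫ y : EuclideanSpace ℝ (Fin d),
          Real.exp (-(f (xstar + y)) - ‖y‖ ^ 2 / (2 * lam)) :=
        mul_le_mul_of_nonneg_left hmono (le_of_lt hαd)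
    _ = c ^ ((d : ℝ) / 2) *
          ∫ x : EuclideanSpace ℝ (Fin d), Real.exp (-(f x) - ‖x - xstar‖ ^ 2 / (2 * lam)) := by
        rw [htr2, hpow]
end

section
/- Let F : ℝᵈ → ℝ be convex, differentiable, and L-smooth, and suppose F = (1/n)∑ f_i where each f_i is convex and L-smooth with common minimizer x* (i.e., ∇F(x*) = 0 and ‖∇f_i(x)‖ ≤ L‖x - x*‖). Fix x with ‖x - x*‖ ≤ R_x and y = x + √(2h)ξ where ‖ξ‖ ≤ C_ξ√d and |⟨∇f_i(x), ξ⟩| ≤ C_x‖∇f_i(x)‖ for all i. Then -√(2h)·C_x·L·R_x - h·L·C_ξ²·d ≤ F(x) - F(y) ≤ √(2h)·C_x·L·R_x, and consequently if h ≤ 1/(98 C_x² L² R_x² + 7 L C_ξ² d) then 3/4 ≤ √(exp(F(x) - F(y))) ≤ 4/3. -/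
open scoped RealInnerProductSpace

/-!
Convexity and `L`-smoothness sandwich each `f i y` between the first-order expansion of `f i` at
`x` and that expansion plus `L/2 ‖y - x‖²`. With `y - x = √(2h) ξ`, the linear term is controlled
by `|⟪∇f_i(x), ξ⟫| ≤ C_x L R_x` and the quadratic one by `‖ξ‖² ≤ C_ξ² d`; averaging over `i` gives
the two-sided bound on `F x - F y`. The step-size condition makes both terms at most `1/7`, and
`exp` maps `[-1/7, 1/7]` into `[3/4, 4/3]`.
-/

open Finset Real

theorem mul_sum_mem_Icc_of_forall_mem_Icc {ι : Type*} [Fintype ι] {u : ι → ℝ} {lo hi : ℝ}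
    (hlo : lo ≤ 0) (hhi : 0 ≤ hi) (hu : ∀ i, u i ∈ Set.Icc lo hi) :
    1 / (Fintype.card ι : ℝ) * ∑ i, u i ∈ Set.Icc lo hi := by
  rcases isEmpty_or_nonempty ι with hι | hι
  · simpa using ⟨hlo, hhi⟩
  have hcard : (0 : ℝ) < Fintype.card ι := by exact_mod_cast Fintype.card_pos
  have hsum_le : ∑ i, u i ≤ Fintype.card ι • hi := sum_le_card_nsmul _ _ _ fun i _ => (hu i).2
  have hle_sum : Fintype.card ι • lo ≤ ∑ i, u i := card_nsmul_le_sum _ _ _ fun i _ => (hu i).1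
  rw [nsmul_eq_mul] at hsum_le hle_sum
  rw [one_div_mul_eq_div]
  exact ⟨(le_div_iff₀ hcard).mpr (by linarith), (div_le_iff₀ hcard).mpr (by linarith)⟩

section FirstOrder

variable {E : Type*} [NormedAddCommGroup E] [InnerProductSpace ℝ E]

theorem sub_mem_Icc_of_first_order_sandwich {φ : E → ℝ} {g x y : E} {L A B : ℝ}
    (hconv : φ x + ⟪g, y - x⟫ ≤ φ y)
    (hsm : φ y ≤ φ x + ⟪g, y - x⟫ + L / 2 * ‖y - x‖ ^ 2)
    (hA : |⟪g, y - x⟫| ≤ A) (hB : L / 2 * ‖y - x‖ ^ 2 ≤ B) :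
    φ x - φ y ∈ Set.Icc (-A - B) A := by
  have := abs_le.mp hA
  constructor <;> linarith

theorem mean_sub_mem_Icc_of_first_order_sandwich {ι : Type*} [Fintype ι] (f : ι → E → ℝ)
    (F : E → ℝ) (hF : ∀ z, F z = 1 / (Fintype.card ι : ℝ) * ∑ i, f i z)
    {g : ι → E} {x y : E} {L A B : ℝ}
    (hconv : ∀ i, f i x + ⟪g i, y - x⟫ ≤ f i y)
    (hsm : ∀ i, f i y ≤ f i x + ⟪g i, y - x⟫ + L / 2 * ‖y - x‖ ^ 2)
    (hA₀ : 0 ≤ A) (hB₀ : 0 ≤ B) (hA : ∀ i, |⟪g i, y - x⟫| ≤ A) (hB : L / 2 * ‖y - x‖ ^ 2 ≤ B) :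
    F x - F y ∈ Set.Icc (-A - B) A := by
  rw [hF, hF, ← mul_sub, ← sum_sub_distrib]
  exact mul_sum_mem_Icc_of_forall_mem_Icc (by linarith) hA₀
    fun i => sub_mem_Icc_of_first_order_sandwich (hconv i) (hsm i) (hA i) hB

theorem abs_inner_smul_le {g ξ : E} {s c M : ℝ} (hs : 0 ≤ s) (hc : 0 ≤ c) (hg : ‖g‖ ≤ M)
    (hξ : |⟪g, ξ⟫| ≤ c * ‖g‖) : |⟪g, s • ξ⟫| ≤ s * c * M := by
  rw [real_inner_smul_right, abs_mul, abs_of_nonneg hs, mul_assoc]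
  gcongr
  exact hξ.trans (by gcongr)

theorem half_mul_norm_sqrt_two_mul_smul_sq (L : ℝ) {h : ℝ} (hh : 0 ≤ h) (ξ : E) :
    L / 2 * ‖√(2 * h) • ξ‖ ^ 2 = h * L * ‖ξ‖ ^ 2 := by
  rw [norm_smul, mul_pow, norm_eq_abs, sq_abs, sq_sqrt (by positivity)]
  ring

end FirstOrder

theorem exp_mem_Icc_of_abs_le {t : ℝ} (ht : |t| ≤ 1 / 7) : exp t ∈ Set.Icc (3 / 4) (4 / 3) := by
  obtain ⟨ht₁, ht₂⟩ := abs_le.mp ht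
  constructor
  · linarith [add_one_le_exp t]
  · calc exp t ≤ exp (1 / 7) := exp_le_exp.mpr ht₂
      _ ≤ 1 / (1 - 1 / 7) := exp_bound_div_one_sub_of_interval (by norm_num) (by norm_num)
      _ ≤ 4 / 3 := by norm_num

theorem sqrt_exp_mem_Icc {D A B : ℝ} (hA : A ≤ 1 / 7) (hB : B ≤ 1 / 7)
    (hD : D ∈ Set.Icc (-A - B) A) : √(exp D) ∈ Set.Icc (3 / 4) (4 / 3) := by
  rw [← exp_half]
  exact exp_mem_Icc_of_abs_le (abs_le.mpr ⟨by linarith [hD.1], by linarith [hD.2]⟩)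

/-- The step-size condition of the theorem, with `p = C_x L R_x` and `q = L C_ξ² d`. -/
theorem sqrt_two_mul_mul_le_and_mul_le {h p q : ℝ} (hh : 0 ≤ h) (hq : 0 ≤ q)
    (hstep : h ≤ 1 / (98 * p ^ 2 + 7 * q)) : √(2 * h) * p ≤ 1 / 7 ∧ h * q ≤ 1 / 7 := by
  have hbudget : h * (98 * p ^ 2 + 7 * q) ≤ 1 := by
    rcases (by positivity : 0 ≤ 98 * p ^ 2 + 7 * q).eq_or_lt with hden | hden
    · rw [← hden]; norm_num
    · exact (le_div_iff₀ hden).mp hstep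
  have hhp : 0 ≤ h * p ^ 2 := by positivity
  have hhq : 0 ≤ h * q := by positivity
  have hsq : (√(2 * h) * p) ^ 2 ≤ (1 / 7) ^ 2 := by
    rw [mul_pow, sq_sqrt (by positivity)]
    nlinarith
  exact ⟨le_of_sq_le_sq hsq (by norm_num), by nlinarith⟩

theorem stmt10_general {d n : ℕ} (f : Fin n → EuclideanSpace ℝ (Fin d) → ℝ)
    (F : EuclideanSpace ℝ (Fin d) → ℝ)
    (L h Rx Cxi Cx : ℝ) (hL : 0 < L) (hh : 0 < h)
    (hCx : 0 < Cx)
    (hF : ∀ z, F z = (1 / (n : ℝ)) * ∑ i, f i z)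
    (hconv : ∀ i z w, f i z + ⟪gradient (f i) z, w - z⟫ ≤ f i w)
    (hsm : ∀ i z w, f i w ≤ f i z + ⟪gradient (f i) z, w - z⟫ + L / 2 * ‖w - z‖ ^ 2)
    (xstar : EuclideanSpace ℝ (Fin d))
    (hgradbound : ∀ i z, ‖gradient (f i) z‖ ≤ L * ‖z - xstar‖)
    (x ξ : EuclideanSpace ℝ (Fin d))
    (hx : ‖x - xstar‖ ≤ Rx)
    (hξ : ‖ξ‖ ≤ Cxi * Real.sqrt d)
    (hinner : ∀ i, |⟪gradient (f i) x, ξ⟫| ≤ Cx * ‖gradient (f i) x‖)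
    (y : EuclideanSpace ℝ (Fin d)) (hy : y = x + Real.sqrt (2 * h) • ξ) :
    (-(Real.sqrt (2 * h) * Cx * L * Rx) - h * L * Cxi ^ 2 * d ≤ F x - F y ∧
      F x - F y ≤ Real.sqrt (2 * h) * Cx * L * Rx) ∧
    (h ≤ 1 / (98 * Cx ^ 2 * L ^ 2 * Rx ^ 2 + 7 * L * Cxi ^ 2 * d) →
      (3 : ℝ) / 4 ≤ Real.sqrt (Real.exp (F x - F y)) ∧
        Real.sqrt (Real.exp (F x - F y)) ≤ (4 : ℝ) / 3) := by
  have hRx : 0 ≤ Rx := (norm_nonneg _).trans hx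
  have hyx : y - x = √(2 * h) • ξ := by rw [hy, add_sub_cancel_left]
  have hlin : ∀ i, |⟪gradient (f i) x, y - x⟫| ≤ √(2 * h) * Cx * L * Rx := fun i => by
    rw [hyx, mul_assoc _ L]
    exact abs_inner_smul_le (sqrt_nonneg _) hCx.le
      ((hgradbound i x).trans (by gcongr)) (hinner i)
  have hquad : L / 2 * ‖y - x‖ ^ 2 ≤ h * L * Cxi ^ 2 * d := by
    have hξsq : ‖ξ‖ ^ 2 ≤ Cxi ^ 2 * d := by
      calc ‖ξ‖ ^ 2 ≤ (Cxi * √d) ^ 2 := by gcongr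
        _ = Cxi ^ 2 * d := by rw [mul_pow, sq_sqrt (Nat.cast_nonneg d)]
    rw [hyx, half_mul_norm_sqrt_two_mul_smul_sq L hh.le, mul_assoc (h * L)]
    gcongr
  have hbounds := mean_sub_mem_Icc_of_first_order_sandwich f F
    (fun z => by rw [hF, Fintype.card_fin]) (fun i => hconv i x y) (fun i => hsm i x y)
    (by positivity) (by positivity) hlin hquad
  refine ⟨hbounds, fun hstep => ?_⟩
  obtain ⟨hA, hB⟩ := sqrt_two_mul_mul_le_and_mul_le (p := Cx * L * Rx) (q := L * Cxi ^ 2 * d)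
    hh.le (by positivity) (by convert hstep using 3 <;> ring)
  exact sqrt_exp_mem_Icc (by rwa [← mul_assoc, ← mul_assoc] at hA)
    (by rwa [← mul_assoc, ← mul_assoc] at hB) hbounds

theorem stmt10 {d n : ℕ} (f : Fin n → EuclideanSpace ℝ (Fin d) → ℝ)
    (F : EuclideanSpace ℝ (Fin d) → ℝ)
    (L h Rx Cxi Cx : ℝ) (hL : 0 < L) (hh : 0 < h) (hRx : 0 < Rx)
    (hCxi : 0 < Cxi) (hCx : 0 < Cx)
    (hdiff : ∀ i, Differentiable ℝ (f i))
    (hF : ∀ z, F z = (1 / (n : ℝ)) * ∑ i, f i z)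
    (hconv : ∀ i z w, f i z + ⟪gradient (f i) z, w - z⟫ ≤ f i w)
    (hsm : ∀ i z w, f i w ≤ f i z + ⟪gradient (f i) z, w - z⟫ + L / 2 * ‖w - z‖ ^ 2)
    (xstar : EuclideanSpace ℝ (Fin d))
    (hgradF : gradient F xstar = 0)
    (hgradbound : ∀ i z, ‖gradient (f i) z‖ ≤ L * ‖z - xstar‖)
    (x ξ : EuclideanSpace ℝ (Fin d))
    (hx : ‖x - xstar‖ ≤ Rx)
    (hξ : ‖ξ‖ ≤ Cxi * Real.sqrt d)
    (hinner : ∀ i, |⟪gradient (f i) x, ξ⟫| ≤ Cx * ‖gradient (f i) x‖)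
    (y : EuclideanSpace ℝ (Fin d)) (hy : y = x + Real.sqrt (2 * h) • ξ) :
    (-(Real.sqrt (2 * h) * Cx * L * Rx) - h * L * Cxi ^ 2 * d ≤ F x - F y ∧
      F x - F y ≤ Real.sqrt (2 * h) * Cx * L * Rx) ∧
    (h ≤ 1 / (98 * Cx ^ 2 * L ^ 2 * Rx ^ 2 + 7 * L * Cxi ^ 2 * d) →
      (3 : ℝ) / 4 ≤ Real.sqrt (Real.exp (F x - F y)) ∧
        Real.sqrt (Real.exp (F x - F y)) ≤ (4 : ℝ) / 3) :=
  stmt10_general f F L h Rx Cxi Cx hL hh hCx hF hconv hsm xstar hgradbound x ξ hx hξ hinner y hy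
end

section
/- Let f : ℝᵈ → ℝ be L-smooth and convex, let η > 0, and fix x ∈ ℝᵈ. Then the ratio of normalization constants ∫exp(-f(x) - ⟨∇f(x), y - x⟩ - ‖y-x‖²/(2η))dy over ∫exp(-f(y) - ‖y-x‖²/(2η))dy is at most (1 + ηL)^{d/2} · exp( (η²L/(2(1+ηL))) · ‖∇f(x)‖² ). -/
/-!
The numerator is a Gaussian integral of variance `η` tilted by `∇f x`, equal to
`exp (-f x) (2πη)^{d/2} exp (η ‖∇f x‖² / 2)`. By `L`-smoothness, the integrand of the denominator
dominates the same tilted Gaussian of variance `s = η / (1 + ηL)`, since `1/(2s) = 1/(2η) + L/2`,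
whose integral has the same closed form. The bound is the ratio of the two closed forms.
Convexity makes the denominator integrable (otherwise its Bochner integral would be `0`): by the
gradient inequality its integrand is dominated by that of the numerator.
-/

open MeasureTheory Real
open scoped RealInnerProductSpace

theorem ConvexOn.add_fderiv_sub_le {E : Type*} [NormedAddCommGroup E] [NormedSpace ℝ E]
    {f : E → ℝ} {f' : E →L[ℝ] ℝ} {x : E} (hf : ConvexOn ℝ Set.univ f) (hfx : HasFDerivAt f f' x)
    (y : E) : f x + f' (y - x) ≤ f y := by
  have hline : ConvexOn ℝ Set.univ (f ∘ AffineMap.lineMap x y) :=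
    hf.comp_affineMap (AffineMap.lineMap x y)
  have hderiv : HasDerivAt (f ∘ AffineMap.lineMap x y) (f' (y - x)) (0 : ℝ) := by
    rw [← AffineMap.lineMap_apply_zero (k := ℝ) x y] at hfx
    exact hfx.comp_hasDerivAt 0 AffineMap.hasDerivAt_lineMap
  have hslope :=
    hline.le_slope_of_hasDerivAt (Set.mem_univ (0 : ℝ)) (Set.mem_univ 1) zero_lt_one hderiv
  simp only [slope_def_field, Function.comp_apply, AffineMap.lineMap_apply_zero,
    AffineMap.lineMap_apply_one, sub_zero, div_one] at hslope
  linarith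

theorem ConvexOn.add_inner_gradient_sub_le {F : Type*} [NormedAddCommGroup F]
    [InnerProductSpace ℝ F] [CompleteSpace F] {f : F → ℝ} {x : F} (hf : ConvexOn ℝ Set.univ f)
    (hfx : DifferentiableAt ℝ f x) (y : F) : f x + ⟪gradient f x, y - x⟫ ≤ f y := by
  simpa only [inner_gradient_left] using hf.add_fderiv_sub_le hfx.hasFDerivAt y

section Gaussian

variable {V : Type*} [NormedAddCommGroup V] [InnerProductSpace ℝ V]

lemma re_cexp_neg_mul_sq_norm_add_neg_inner (b : ℝ) (w v : V) :
    RCLike.re (Complex.exp (-(b : ℂ) * ‖v‖ ^ 2 + (-1) * ⟪w, v⟫)) =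
      rexp (-b * ‖v‖ ^ 2 - ⟪w, v⟫) := by
  rw [RCLike.re_to_complex, ← Complex.exp_ofReal_re]
  push_cast
  ring_nf

lemma exp_sub_inner_sub_sq_div_eq (a s : ℝ) (w x y : V) :
    rexp (a - ⟪w, y - x⟫ - ‖y - x‖ ^ 2 / (2 * s)) =
      rexp a * rexp (-(2 * s)⁻¹ * ‖y - x‖ ^ 2 - ⟪w, y - x⟫) := by
  rw [← exp_add]
  ring_nf

variable [FiniteDimensional ℝ V] [MeasurableSpace V] [BorelSpace V]

theorem integrable_rexp_neg_mul_sq_norm_sub_inner {b : ℝ} (hb : 0 < b) (w : V) :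
    Integrable fun v : V ↦ rexp (-b * ‖v‖ ^ 2 - ⟪w, v⟫) := by
  simpa only [re_cexp_neg_mul_sq_norm_add_neg_inner] using
    (GaussianFourier.integrable_cexp_neg_mul_sq_norm_add (b := b) hb (-1) w).re

theorem integral_rexp_neg_mul_sq_norm_sub_inner {b : ℝ} (hb : 0 < b) (w : V) :
    ∫ v : V, rexp (-b * ‖v‖ ^ 2 - ⟪w, v⟫) =
      (π / b) ^ (Module.finrank ℝ V / 2 : ℝ) * rexp (‖w‖ ^ 2 / (4 * b)) := by
  simp_rw [← re_cexp_neg_mul_sq_norm_add_neg_inner]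
  rw [integral_re (GaussianFourier.integrable_cexp_neg_mul_sq_norm_add (b := b) hb (-1) w),
    GaussianFourier.integral_cexp_neg_mul_sq_norm_add (b := b) hb (-1) w,
    ← Complex.ofReal_div]
  have hdim : (Module.finrank ℝ V / 2 : ℂ) = ((Module.finrank ℝ V / 2 : ℝ) : ℂ) := by
    push_cast; rfl
  have hmean : ((-1) ^ 2 * (‖w‖ : ℂ) ^ 2 / (4 * b) : ℂ) = ((‖w‖ ^ 2 / (4 * b) : ℝ) : ℂ) := by
    push_cast; ring
  rw [hdim, ← Complex.ofReal_cpow (by positivity), hmean, ← Complex.ofReal_exp,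
    ← Complex.ofReal_mul, RCLike.re_to_complex, Complex.ofReal_re]

theorem integrable_exp_sub_inner_sub_sq_div (a : ℝ) {s : ℝ} (hs : 0 < s) (w x : V) :
    Integrable fun y : V ↦ rexp (a - ⟪w, y - x⟫ - ‖y - x‖ ^ 2 / (2 * s)) := by
  simp_rw [exp_sub_inner_sub_sq_div_eq a s]
  exact ((integrable_rexp_neg_mul_sq_norm_sub_inner (by positivity) w).comp_sub_right x).const_mul _

theorem integral_exp_sub_inner_sub_sq_div (a : ℝ) {s : ℝ} (hs : 0 < s) (w x : V) :
    ∫ y : V, rexp (a - ⟪w, y - x⟫ - ‖y - x‖ ^ 2 / (2 * s)) =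
      rexp a * (2 * π * s) ^ (Module.finrank ℝ V / 2 : ℝ) * rexp (s * ‖w‖ ^ 2 / 2) := by
  simp_rw [exp_sub_inner_sub_sq_div_eq a s]
  rw [integral_const_mul, integral_sub_right_eq_self
      (fun v ↦ rexp (-(2 * s)⁻¹ * ‖v‖ ^ 2 - ⟪w, v⟫)) x,
    integral_rexp_neg_mul_sq_norm_sub_inner (by positivity) w]
  have hvar : π / (2 * s)⁻¹ = 2 * π * s := by field_simp
  have hmean : ‖w‖ ^ 2 / (4 * (2 * s)⁻¹) = s * ‖w‖ ^ 2 / 2 := by field_simp; ring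
  rw [hvar, hmean]
  ring

theorem ConvexOn.integrable_exp_neg_sub_sq_div {f : V → ℝ} (hf : ConvexOn ℝ Set.univ f)
    (hdiff : Differentiable ℝ f) {s : ℝ} (hs : 0 < s) (x : V) :
    Integrable fun y : V ↦ rexp (-f y - ‖y - x‖ ^ 2 / (2 * s)) := by
  refine (integrable_exp_sub_inner_sub_sq_div (-f x) hs (gradient f x) x).mono' ?_
    (ae_of_all _ fun y ↦ ?_)
  · have := hdiff.continuous
    exact (by fun_prop : Continuous fun y : V ↦ rexp (-f y - ‖y - x‖ ^ 2 / (2 * s)))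
      |>.aestronglyMeasurable
  · rw [norm_of_nonneg (exp_pos _).le]
    exact exp_le_exp.2 (by linarith [hf.add_inner_gradient_sub_le (hdiff x) y])

end Gaussian

theorem stmt17 {d : ℕ} (f : EuclideanSpace ℝ (Fin d) → ℝ) (L eta : ℝ)
    (hL : 0 < L) (heta : 0 < eta)
    (hconv : ConvexOn ℝ Set.univ f) (hdiff : Differentiable ℝ f)
    (hsm : ∀ x y, f y ≤ f x + ⟪gradient f x, y - x⟫ + L / 2 * ‖y - x‖ ^ 2)
    (x : EuclideanSpace ℝ (Fin d)) :
    (∫ y : EuclideanSpace ℝ (Fin d),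
        Real.exp (-(f x) - ⟪gradient f x, y - x⟫ - ‖y - x‖ ^ 2 / (2 * eta))) ≤
      (1 + eta * L) ^ ((d : ℝ) / 2) *
        Real.exp (eta ^ 2 * L / (2 * (1 + eta * L)) * ‖gradient f x‖ ^ 2) *
        ∫ y : EuclideanSpace ℝ (Fin d), Real.exp (-(f y) - ‖y - x‖ ^ 2 / (2 * eta)) := by
  set g := gradient f x
  set s := eta / (1 + eta * L) with hs_def
  have hηL : 0 < 1 + eta * L := by positivity
  have hs : 0 < s := by positivity
  have hnum := integral_exp_sub_inner_sub_sq_div (-f x) heta g x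
  have hgauss := integral_exp_sub_inner_sub_sq_div (-f x) hs g x
  rw [finrank_euclideanSpace_fin] at hnum hgauss
  have hden : rexp (-f x) * (2 * π * s) ^ ((d : ℝ) / 2) * rexp (s * ‖g‖ ^ 2 / 2) ≤
      ∫ y, rexp (-f y - ‖y - x‖ ^ 2 / (2 * eta)) := by
    rw [← hgauss]
    refine integral_mono (integrable_exp_sub_inner_sub_sq_div _ hs g x)
      (hconv.integrable_exp_neg_sub_sq_div hdiff heta x) fun y ↦ exp_le_exp.2 ?_
    have hsplit : ‖y - x‖ ^ 2 / (2 * s) = ‖y - x‖ ^ 2 / (2 * eta) + L / 2 * ‖y - x‖ ^ 2 := by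
      rw [hs_def]; field_simp
    linarith [hsm x y]
  have hvar : 2 * π * eta = (1 + eta * L) * (2 * π * s) := by rw [hs_def]; field_simp
  have hmean : eta * ‖g‖ ^ 2 / 2 =
      eta ^ 2 * L / (2 * (1 + eta * L)) * ‖g‖ ^ 2 + s * ‖g‖ ^ 2 / 2 := by
    rw [hs_def]; field_simp; ring
  calc _ = (1 + eta * L) ^ ((d : ℝ) / 2) * rexp (eta ^ 2 * L / (2 * (1 + eta * L)) * ‖g‖ ^ 2) *
        (rexp (-f x) * (2 * π * s) ^ ((d : ℝ) / 2) * rexp (s * ‖g‖ ^ 2 / 2)) := by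
        rw [hnum, hvar, mul_rpow hηL.le (by positivity), hmean, exp_add]; ring
    _ ≤ _ := by gcongr
end

section
/- Let π̂ be a probability distribution on ℝᵈ, Ω ⊆ ℝᵈ a measurable set, and π a second distribution such that (1/2)·π(S) ≤ π̂(S) ≤ 2·π(S) for all measurable S ⊆ Ω, where π restricted to Ω satisfies the log-isoperimetric inequality with constant ψ. Then π̂ restricted to Ω satisfies the log-isoperimetric inequality with constant 8ψ: for any partition S₁, S₂, S₃ of Ω, π̂_Ω(S₃) ≥ (1/(16ψ)) · d(S₁,S₂) · min(π̂_Ω(S₁), π̂_Ω(S₂)) · √(log(1 + 1/min(π̂_Ω(S₁), π̂_Ω(S₂)))). -/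
/-!
Write `f(x) = x √(log (1 + 1/x))` and `κ = π(Ω) / π̂(Ω)`, so that `κ ≥ 1/2`. The two-sided
comparison gives `π̂_Ω(S) ≤ 2κ π_Ω(S)` and `κ π_Ω(S) ≤ 2 π̂_Ω(S)` for `S ⊆ Ω`. Since `f` is
increasing (Bernoulli's inequality) and `f(c x) ≤ c f(x)` for `c ≥ 1`, the smaller `π̂_Ω`-mass `m̂`
of `S₁, S₂` satisfies `f(m̂) ≤ 2κ f(m)`, where `m` is the smaller `π_Ω`-mass. Hence
`δ f(m̂) / (16ψ) ≤ (κ/4) · δ f(m) / (2ψ) ≤ κ π_Ω(S₃) / 4 ≤ π̂_Ω(S₃) / 2`.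
-/

open MeasureTheory Real

/-- Vanishes at `0`, where `1 / 0 = 0`. -/
noncomputable def logIsoProfile (x : ℝ) : ℝ := x * √(log (1 + 1 / x))

/-- Bernoulli: `(1 + 1/b) ^ (b/a) ≥ 1 + 1/a`. -/
lemma mul_log_one_add_inv_le {a b : ℝ} (ha : 0 < a) (hab : a ≤ b) :
    a * log (1 + 1 / a) ≤ b * log (1 + 1 / b) := by
  have hb : 0 < b := ha.trans_le hab
  have hbernoulli : 1 + 1 / a ≤ (1 + 1 / b) ^ (b / a) := by
    have := one_add_mul_self_le_rpow_one_add (s := 1 / b)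
      (by linarith [one_div_pos.mpr hb]) ((one_le_div ha).mpr hab)
    rwa [show b / a * (1 / b) = 1 / a by field_simp] at this
  have hlog : log (1 + 1 / a) ≤ b / a * log (1 + 1 / b) := by
    rw [← log_rpow (by positivity)]
    exact log_le_log (by positivity) hbernoulli
  calc a * log (1 + 1 / a) ≤ a * (b / a * log (1 + 1 / b)) := by gcongr
    _ = b * log (1 + 1 / b) := by field_simp

lemma logIsoProfile_monotoneOn : MonotoneOn logIsoProfile (Set.Ioi 0) := by
  intro a (ha : 0 < a) b (hb : 0 < b) hab
  have hsq : a * (a * log (1 + 1 / a)) ≤ b * (b * log (1 + 1 / b)) :=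
    mul_le_mul hab (mul_log_one_add_inv_le ha hab)
      (mul_nonneg ha.le (log_nonneg (by simp [ha.le]))) hb.le
  have hsqrt : ∀ x : ℝ, 0 < x → logIsoProfile x = √(x * (x * log (1 + 1 / x))) := by
    intro x hx
    rw [← mul_assoc, sqrt_mul (mul_self_nonneg x), sqrt_mul_self hx.le, logIsoProfile]
  rw [hsqrt a ha, hsqrt b hb]
  exact sqrt_le_sqrt hsq

lemma logIsoProfile_mul_le {c x : ℝ} (hc : 1 ≤ c) (hx : 0 < x) :
    logIsoProfile (c * x) ≤ c * logIsoProfile x := by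
  have hcx : x ≤ c * x := le_mul_of_one_le_left hx.le hc
  have hlog : log (1 + 1 / (c * x)) ≤ log (1 + 1 / x) :=
    log_le_log (by positivity) (by gcongr)
  calc logIsoProfile (c * x) ≤ c * x * √(log (1 + 1 / x)) := by
        unfold logIsoProfile; gcongr
    _ = c * logIsoProfile x := by rw [logIsoProfile, mul_assoc]

lemma logIsoProfile_bound_transfer {ψ δ κ p₁ p₂ p₃ q₁ q₂ q₃ : ℝ} (hψ : 0 < ψ) (hδ : 0 ≤ δ)
    (hκ : 1 / 2 ≤ κ) (hq₁ : 0 ≤ q₁) (hq₂ : 0 ≤ q₂) (hq₃ : 0 ≤ q₃)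
    (h₁ : q₁ ≤ 2 * κ * p₁) (h₂ : q₂ ≤ 2 * κ * p₂) (h₃ : κ * p₃ ≤ 2 * q₃)
    (hp : 1 / (2 * ψ) * δ * logIsoProfile (min p₁ p₂) ≤ p₃) :
    1 / (16 * ψ) * δ * logIsoProfile (min q₁ q₂) ≤ q₃ := by
  rcases (le_min hq₁ hq₂).eq_or_lt with hq | hq
  · rw [← hq, logIsoProfile, zero_mul, mul_zero]
    exact hq₃
  have hqp : min q₁ q₂ ≤ 2 * κ * min p₁ p₂ := by
    rw [mul_min_of_nonneg _ _ (by linarith)]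
    exact min_le_min h₁ h₂
  have hp_pos : 0 < min p₁ p₂ := pos_of_mul_pos_right (hq.trans_le hqp) (by linarith)
  have hprofile : logIsoProfile (min q₁ q₂) ≤ 2 * κ * logIsoProfile (min p₁ p₂) :=
    (logIsoProfile_monotoneOn hq (hq.trans_le hqp) hqp).trans
      (logIsoProfile_mul_le (by linarith) hp_pos)
  calc 1 / (16 * ψ) * δ * logIsoProfile (min q₁ q₂)
      ≤ 1 / (16 * ψ) * δ * (2 * κ * logIsoProfile (min p₁ p₂)) := by gcongr
    _ = κ / 4 * (1 / (2 * ψ) * δ * logIsoProfile (min p₁ p₂)) := by field_simp; ring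
    _ ≤ κ / 4 * p₃ := by gcongr
    _ ≤ q₃ := by linarith

lemma div_mul_div_of_le {a A B : ℝ} (ha : 0 ≤ a) (haA : a ≤ A) : A / B * (a / A) = a / B := by
  rcases (ha.trans haA).eq_or_lt with hA | hA
  · rw [← hA, le_antisymm (hA ▸ haA) ha]
    simp
  · field_simp

section ConditionalComparison

variable {α : Type*} [MeasurableSpace α]

/-- `μ_Ω(S)` as a real number. -/
noncomputable def condProb (μ : Measure α) (Ω S : Set α) : ℝ := (μ S).toReal / (μ Ω).toReal

lemma condProb_nonneg (μ : Measure α) (Ω S : Set α) : 0 ≤ condProb μ Ω S := by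
  unfold condProb; positivity

variable {μ ν : Measure α} [IsFiniteMeasure μ] [IsFiniteMeasure ν] {Ω : Set α}

lemma toReal_le_two_mul_and_le_two_mul
    (hcomp : ∀ S ⊆ Ω, MeasurableSet S → μ S / 2 ≤ ν S ∧ ν S ≤ 2 * μ S)
    {S : Set α} (hS : S ⊆ Ω) (hSm : MeasurableSet S) :
    (μ S).toReal ≤ 2 * (ν S).toReal ∧ (ν S).toReal ≤ 2 * (μ S).toReal := by
  obtain ⟨hlow, hup⟩ := hcomp S hS hSm
  constructor
  · have := ENNReal.toReal_mono (measure_ne_top ν S) hlow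
    rw [ENNReal.toReal_div, ENNReal.toReal_ofNat] at this
    linarith
  · have := ENNReal.toReal_mono (ENNReal.mul_ne_top (by simp) (measure_ne_top μ S)) hup
    rwa [ENNReal.toReal_mul, ENNReal.toReal_ofNat] at this

lemma condProb_le_two_mul
    (hcomp : ∀ S ⊆ Ω, MeasurableSet S → μ S / 2 ≤ ν S ∧ ν S ≤ 2 * μ S)
    {S : Set α} (hS : S ⊆ Ω) (hSm : MeasurableSet S) :
    condProb ν Ω S ≤ 2 * ((μ Ω).toReal / (ν Ω).toReal) * condProb μ Ω S := by
  rw [condProb, condProb, mul_assoc, div_mul_div_of_le ENNReal.toReal_nonneg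
    (ENNReal.toReal_mono (measure_ne_top μ Ω) (measure_mono hS)), mul_div_assoc']
  gcongr
  exact (toReal_le_two_mul_and_le_two_mul hcomp hS hSm).2

lemma mul_condProb_le_two_mul
    (hcomp : ∀ S ⊆ Ω, MeasurableSet S → μ S / 2 ≤ ν S ∧ ν S ≤ 2 * μ S)
    {S : Set α} (hS : S ⊆ Ω) (hSm : MeasurableSet S) :
    (μ Ω).toReal / (ν Ω).toReal * condProb μ Ω S ≤ 2 * condProb ν Ω S := by
  rw [condProb, condProb, div_mul_div_of_le ENNReal.toReal_nonneg
    (ENNReal.toReal_mono (measure_ne_top μ Ω) (measure_mono hS)), mul_div_assoc']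
  gcongr
  exact (toReal_le_two_mul_and_le_two_mul hcomp hS hSm).1

lemma one_half_le_ratio
    (hcomp : ∀ S ⊆ Ω, MeasurableSet S → μ S / 2 ≤ ν S ∧ ν S ≤ 2 * μ S)
    (hΩ : MeasurableSet Ω) (hνΩ : (ν Ω).toReal ≠ 0) :
    1 / 2 ≤ (μ Ω).toReal / (ν Ω).toReal := by
  rw [div_le_div_iff₀ two_pos (ENNReal.toReal_nonneg.lt_of_ne' hνΩ), one_mul]
  linarith [(toReal_le_two_mul_and_le_two_mul hcomp subset_rfl hΩ).2]

end ConditionalComparison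

theorem stmt19 {d : ℕ}
    (pr prh : Measure (EuclideanSpace ℝ (Fin d)))
    [IsProbabilityMeasure pr] [IsProbabilityMeasure prh]
    (Ω : Set (EuclideanSpace ℝ (Fin d))) (hΩ : MeasurableSet Ω)
    (ψ : ℝ) (hψ : 0 < ψ)
    (hcomp : ∀ S ⊆ Ω, MeasurableSet S → pr S / 2 ≤ prh S ∧ prh S ≤ 2 * pr S)
    (hiso : ∀ S₁ S₂ S₃ : Set (EuclideanSpace ℝ (Fin d)),
      MeasurableSet S₁ → MeasurableSet S₂ → MeasurableSet S₃ →
      S₁ ∪ S₂ ∪ S₃ = Ω → Disjoint S₁ S₂ → Disjoint S₁ S₃ → Disjoint S₂ S₃ →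
      ∀ δ : ℝ, 0 ≤ δ → (∀ a ∈ S₁, ∀ b ∈ S₂, δ ≤ dist a b) →
      1 / (2 * ψ) * δ *
          min ((pr S₁).toReal / (pr Ω).toReal) ((pr S₂).toReal / (pr Ω).toReal) *
          Real.sqrt (Real.log (1 +
            1 / min ((pr S₁).toReal / (pr Ω).toReal) ((pr S₂).toReal / (pr Ω).toReal))) ≤
        (pr S₃).toReal / (pr Ω).toReal) :
    ∀ S₁ S₂ S₃ : Set (EuclideanSpace ℝ (Fin d)),
      MeasurableSet S₁ → MeasurableSet S₂ → MeasurableSet S₃ →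
      S₁ ∪ S₂ ∪ S₃ = Ω → Disjoint S₁ S₂ → Disjoint S₁ S₃ → Disjoint S₂ S₃ →
      ∀ δ : ℝ, 0 ≤ δ → (∀ a ∈ S₁, ∀ b ∈ S₂, δ ≤ dist a b) →
      1 / (16 * ψ) * δ *
          min ((prh S₁).toReal / (prh Ω).toReal) ((prh S₂).toReal / (prh Ω).toReal) *
          Real.sqrt (Real.log (1 +
            1 / min ((prh S₁).toReal / (prh Ω).toReal) ((prh S₂).toReal / (prh Ω).toReal))) ≤
        (prh S₃).toReal / (prh Ω).toReal := by
  intro S₁ S₂ S₃ h₁ h₂ h₃ hunion h12 h13 h23 δ hδ hdist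
  have hS₁ : S₁ ⊆ Ω := hunion ▸ Set.subset_union_left.trans Set.subset_union_left
  have hS₂ : S₂ ⊆ Ω := hunion ▸ Set.subset_union_right.trans Set.subset_union_left
  have hS₃ : S₃ ⊆ Ω := hunion ▸ Set.subset_union_right
  rcases eq_or_ne (prh Ω).toReal 0 with hprhΩ | hprhΩ
  · simp [hprhΩ]
  have key := logIsoProfile_bound_transfer hψ hδ (one_half_le_ratio hcomp hΩ hprhΩ)
    (condProb_nonneg _ _ _) (condProb_nonneg _ _ _) (condProb_nonneg _ _ _)
    (condProb_le_two_mul hcomp hS₁ h₁) (condProb_le_two_mul hcomp hS₂ h₂)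
    (mul_condProb_le_two_mul hcomp hS₃ h₃)
    (by simpa only [logIsoProfile, condProb, mul_assoc] using
      hiso S₁ S₂ S₃ h₁ h₂ h₃ hunion h12 h13 h23 δ hδ hdist)
  simpa only [logIsoProfile, condProb, mul_assoc] using key
end
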